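/- arXiv:1808.08394 — 4 statements merged into one kernel-verified Lean document; each statement's English description precedes it below -/
import Mathlib

section
/- Let H and α be entire functions such that H′ and α′ have no common zeros. Then there exists an at most countable set E ⊂ ℂ with the following property: for every a ∈ ℂ \ E, every c ∈ ℂ, and every pair of points z, w ∈ ℂ satisfying H(z) + a·α(z) = c, H′(z) + a·α′(z) = 0, H(w) + a·α(w) = c, and H′(w) + a·α′(w) = 0, one has α(z) = α(w). -/
/-!
Away from the zeros of `α'`, which are critical points of no `H_a`, the critical points of
`H_a` are the solutions of `F z = a` for `F = -H' / α'`, and the critical value there is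
`Λ z = H z + F z * α z`, where `Λ' = α F'`. If `F'` does not vanish at two such points `z`, `w`,
the inverse branches `ζ`, `ω` of `F` near them give two branches `a ↦ Λ (ζ a)`, `a ↦ Λ (ω a)` of
critical values, with derivatives `α z` and `α w` at `a`. When `α z ≠ α w` these branches meet
only at isolated parameters, so the bad parameters, together with the critical values of `F`,
are locally isolated and hence countable.
-/

open Filter Topology Set

theorem countable_image_of_forall_eventually_eq {X Y : Type*} [TopologicalSpace X]
    [SecondCountableTopology X] {S : Set X} {g : X → Y}
    (h : ∀ x ∈ S, ∀ᶠ y in 𝓝[S] x, g y = g x) : (g '' S).Countable := by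
  obtain ⟨t, -, htc, hcover⟩ := TopologicalSpace.countable_cover_nhdsWithin h
  refine (htc.image g).mono ?_
  rintro _ ⟨y, hy, rfl⟩
  obtain ⟨x, hxt, hyx⟩ := mem_iUnion₂.1 (hcover hy)
  exact ⟨x, hxt, hyx.symm⟩

section RCLike

variable {𝕜 E : Type*} [RCLike 𝕜] [NormedAddCommGroup E] [NormedSpace 𝕜 E]

theorem eventually_eq_of_deriv_eventuallyEq_zero {f : 𝕜 → E} {x : 𝕜}
    (hf : ∀ᶠ y in 𝓝 x, DifferentiableAt 𝕜 f y) (hf' : deriv f =ᶠ[𝓝 x] 0) :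
    ∀ᶠ y in 𝓝 x, f y = f x := by
  obtain ⟨r, hr, hball⟩ := Metric.eventually_nhds_iff_ball.1 (hf.and hf')
  filter_upwards [Metric.ball_mem_nhds x hr] with y hy
  exact Metric.isOpen_ball.is_const_of_deriv_eq_zero (convex_ball x r).isPreconnected
    (fun z hz => (hball z hz).1.differentiableWithinAt) (fun z hz => (hball z hz).2) hy
    (Metric.mem_ball_self hr)

theorem AnalyticOnNhd.countable_image_setOf_deriv_eq_zero [CompleteSpace E] {f : 𝕜 → E}
    {U : Set 𝕜} (hf : AnalyticOnNhd 𝕜 f U) : (f '' {z ∈ U | deriv f z = 0}).Countable := by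
  refine countable_image_of_forall_eventually_eq ?_
  rintro z₀ ⟨hz₀, -⟩
  rcases (hf.deriv z₀ hz₀).eventually_eq_zero_or_eventually_ne_zero with h | h
  · have hdiff : ∀ᶠ z in 𝓝 z₀, DifferentiableAt 𝕜 f z :=
      (hf z₀ hz₀).eventually_analyticAt.mono fun _ hz => hz.differentiableAt
    exact (eventually_eq_of_deriv_eventuallyEq_zero hdiff h).filter_mono nhdsWithin_le_nhds
  · rw [eventually_nhdsWithin_iff] at h ⊢
    filter_upwards [h] with z hz hzcrit
    by_cases hzz₀ : z = z₀
    · rw [hzz₀]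
    · exact absurd hzcrit.2 (hz hzz₀)

end RCLike

theorem eventually_eq_of_apply_eq_of_hasStrictDerivAt {𝕜 E : Type*} [NontriviallyNormedField 𝕜]
    [CompleteSpace 𝕜] [NormedAddCommGroup E] [NormedSpace 𝕜 E] {F : 𝕜 → 𝕜} {Λ : 𝕜 → E}
    {z₀ w₀ F'z F'w : 𝕜} {c₁ c₂ : E}
    (hFz : HasStrictDerivAt F F'z z₀) (hz : F'z ≠ 0) (hFw : HasStrictDerivAt F F'w w₀)
    (hw : F'w ≠ 0) (hΛz : HasDerivAt Λ (F'z • c₁) z₀) (hΛw : HasDerivAt Λ (F'w • c₂) w₀)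
    (hc : c₁ ≠ c₂) (hF : F z₀ = F w₀) :
    ∀ᶠ p : 𝕜 × 𝕜 in 𝓝 (z₀, w₀), F p.1 = F p.2 → Λ p.1 = Λ p.2 → F p.1 = F z₀ := by
  set ζ := hFz.localInverse F F'z z₀ hz
  set ω := hFw.localInverse F F'w w₀ hw
  have hζ : ∀ᶠ x in 𝓝 z₀, ζ (F x) = x := hFz.eventually_left_inverse hz
  have hω : ∀ᶠ y in 𝓝 w₀, ω (F y) = y := hFw.eventually_left_inverse hw
  have hΛζ : HasDerivAt (Λ ∘ ζ) c₁ (F z₀) := by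
    rw [← hζ.self_of_nhds] at hΛz
    simpa only [inv_smul_smul₀ hz] using hΛz.scomp (F z₀) (hFz.to_localInverse hz).hasDerivAt
  have hΛω : HasDerivAt (Λ ∘ ω) c₂ (F z₀) := by
    rw [← hω.self_of_nhds] at hΛw
    simpa only [hF, inv_smul_smul₀ hw] using hΛw.scomp (F w₀) (hFw.to_localInverse hw).hasDerivAt
  -- the two branches of critical values meet only at isolated parameters
  have hbranches : ∀ᶠ a in 𝓝 (F z₀), Λ (ζ a) - Λ (ω a) = 0 → a = F z₀ := by
    have := (hΛζ.sub hΛω).eventually_ne (c := 0) (sub_ne_zero.2 hc)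
    rw [eventually_nhdsWithin_iff] at this
    filter_upwards [this] with a ha h
    exact by_contra fun hne => ha hne h
  filter_upwards [(hζ.and (hFz.hasDerivAt.continuousAt.eventually hbranches)).prod_nhds hω]
    with ⟨x, y⟩ ⟨⟨hx, hxbranch⟩, hy⟩ hFxy hΛxy
  apply hxbranch
  rw [hx, hFxy, hy, hΛxy, sub_self]

theorem AnalyticOnNhd.exists_countable_forall_eq_of_hasDerivAt {𝕜 E : Type*} [RCLike 𝕜]
    [NormedAddCommGroup E] [NormedSpace 𝕜 E] {F : 𝕜 → 𝕜} {Λ g : 𝕜 → E} {U : Set 𝕜}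
    (hF : AnalyticOnNhd 𝕜 F U) (hΛ : ∀ z ∈ U, HasDerivAt Λ (deriv F z • g z) z) :
    ∃ S : Set 𝕜, S.Countable ∧ ∀ a ∉ S, ∀ z ∈ U, ∀ w ∈ U,
      F z = a → F w = a → Λ z = Λ w → g z = g w := by
  set bad : Set (𝕜 × 𝕜) := {p | p.1 ∈ U ∧ p.2 ∈ U ∧ deriv F p.1 ≠ 0 ∧ deriv F p.2 ≠ 0 ∧
    F p.1 = F p.2 ∧ Λ p.1 = Λ p.2 ∧ g p.1 ≠ g p.2}
  have hbad : ((fun p => F p.1) '' bad).Countable := by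
    refine countable_image_of_forall_eventually_eq ?_
    rintro ⟨z₀, w₀⟩ ⟨hz, hw, hz', hw', hFzw, -, hg⟩
    filter_upwards [(eventually_eq_of_apply_eq_of_hasStrictDerivAt (hF z₀ hz).hasStrictDerivAt
      hz' (hF w₀ hw).hasStrictDerivAt hw' (hΛ z₀ hz) (hΛ w₀ hw) hg hFzw).filter_mono
      nhdsWithin_le_nhds, self_mem_nhdsWithin] with p hp hpbad
    obtain ⟨-, -, -, -, hFp, hΛp, -⟩ := hpbad
    exact hp hFp hΛp
  refine ⟨F '' {z ∈ U | deriv F z = 0} ∪ (fun p => F p.1) '' bad,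
    hF.countable_image_setOf_deriv_eq_zero.union hbad, ?_⟩
  rintro a ha z hz w hw rfl hFw hΛzw
  by_contra hg
  have hz' : deriv F z ≠ 0 := fun h => ha (Or.inl ⟨z, ⟨hz, h⟩, rfl⟩)
  have hw' : deriv F w ≠ 0 := fun h => ha (Or.inl ⟨w, ⟨hw, h⟩, hFw⟩)
  exact ha (Or.inr ⟨(z, w), ⟨hz, hw, hz', hw', hFw.symm, hΛzw, hg⟩, rfl⟩)

theorem ne_zero_and_neg_div_eq_of_add_mul_eq_zero {K : Type*} [Field K] {p q a : K}
    (hpq : ¬(p = 0 ∧ q = 0)) (h : p + a * q = 0) : q ≠ 0 ∧ -p / q = a := by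
  have hq : q ≠ 0 := fun hq => hpq ⟨by simpa [hq] using h, hq⟩
  refine ⟨hq, ?_⟩
  rw [div_eq_iff hq]
  linear_combination -h

theorem HasDerivAt.add_mul_of_mul_eq_neg {𝕜 : Type*} [NontriviallyNormedField 𝕜]
    {f g F : 𝕜 → 𝕜} {f' g' F' x : 𝕜} (hf : HasDerivAt f f' x) (hg : HasDerivAt g g' x)
    (hF : HasDerivAt F F' x) (hcrit : F x * g' = -f') :
    HasDerivAt (fun y => f y + F y * g y) (F' * g x) x := by
  refine (hf.add (hF.mul hg)).congr_deriv ?_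
  linear_combination hcrit

/-- Let H and α be entire functions such that H′ and α′ have no
common zeros. Then there exists an at most countable set E ⊂ ℂ such that for
every a ∉ E, every c ∈ ℂ, and every pair of critical points z, w of
H_a = H + a·α lying on the level set H_a = c, one has α(z) = α(w). -/
theorem stmt0 (H α : ℂ → ℂ)
    (hH : Differentiable ℂ H) (hα : Differentiable ℂ α)
    (hno : ∀ z : ℂ, ¬(deriv H z = 0 ∧ deriv α z = 0)) :
    ∃ E : Set ℂ, E.Countable ∧
      ∀ a : ℂ, a ∉ E → ∀ c : ℂ, ∀ z w : ℂ,
        H z + a * α z = c → deriv H z + a * deriv α z = 0 →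
        H w + a * α w = c → deriv H w + a * deriv α w = 0 →
        α z = α w := by
  set F : ℂ → ℂ := fun z => -deriv H z / deriv α z
  have hF : AnalyticOnNhd ℂ F {z | deriv α z ≠ 0} := fun z hz =>
    (hH.analyticAt z).deriv.neg.div (hα.analyticAt z).deriv hz
  have hΛ : ∀ z ∈ {z | deriv α z ≠ 0},
      HasDerivAt (fun z => H z + F z * α z) (deriv F z • α z) z := fun z hz =>
    (hH z).hasDerivAt.add_mul_of_mul_eq_neg (hα z).hasDerivAt
      (hF z hz).differentiableAt.hasDerivAt (div_mul_cancel₀ _ hz)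
  obtain ⟨E, hE, hgood⟩ := hF.exists_countable_forall_eq_of_hasDerivAt hΛ
  refine ⟨E, hE, fun a ha c z w hz hz' hw hw' => ?_⟩
  obtain ⟨hzU, hFz : F z = a⟩ := ne_zero_and_neg_div_eq_of_add_mul_eq_zero (hno z) hz'
  obtain ⟨hwU, hFw : F w = a⟩ := ne_zero_and_neg_div_eq_of_add_mul_eq_zero (hno w) hw'
  refine hgood a ha z hzU w hwU hFz hFw ?_
  rw [hFz, hFw, hz, hw]
end

section
/- Let h be a transcendental entire function with h(1) ≠ 0 and h(−1) ≠ 0, and for a ∈ ℂ put H_a(z) := cos z · h(sin z) + a · sin z. Then there exists an at most countable set E ⊂ ℂ such that for every a ∈ ℂ \ E, every c ∈ ℂ, and any two solutions u, v of the simultaneous equations H_a(z) = c and H_a′(z) = 0, one has cos u = cos v and sin u = sin v. -/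
/-!
Write `H_a = P + a Q` with `P z = cos z * h (sin z)` and `Q = sin`. Since `h (±1) ≠ 0`, every
critical point `z` of `H_a` has `Q' z ≠ 0`, so it is a solution of `A z = a` for
`A = critParam P Q = -P' / Q'`. Now `A' = -W / Q'²` with `W` the Wronskian of `Q'` and `P'`, an
entire function with `W (π / 2) = -h 1 ≠ 0`; so outside the countable set `A '' {W = 0}` each
critical point has a local inverse branch `φ` of `A`, along which the critical value `b ↦ H_b (φ b)`
has derivative `Q (φ b)` (envelope theorem). If two critical points `t₁, t₂` of `H_{a₀}` have
`Q t₁ ≠ Q t₂`, the difference of the two critical values therefore has nonzero derivative at `a₀`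
and vanishes at no nearby `a ≠ a₀`: on the set of pairs of critical points with equal critical
values but different `Q`, the parameter is locally constant, hence takes countably many values.
Finally `H_a' z = -s h s + (1 - s²) h' s + a cos z` with `s = sin z`, so for `a ≠ 0` two critical
points with equal sines also have equal cosines.
-/

open Complex Filter Set Topology

theorem countable_image_of_eventually_eq {X Y : Type*} [TopologicalSpace X]
    [SecondCountableTopology X] {S : Set X} {f : X → Y}
    (hf : ∀ x ∈ S, ∀ᶠ y in 𝓝[S] x, f y = f x) : (f '' S).Countable := by
  obtain ⟨t, -, htc, hSt⟩ := TopologicalSpace.countable_cover_nhdsWithin hf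
  refine (htc.image f).mono ?_
  rintro _ ⟨y, hy, rfl⟩
  obtain ⟨x, hxt, hyx⟩ := mem_iUnion₂.1 (hSt hy)
  exact ⟨x, hxt, hyx.symm⟩

theorem Differentiable.countable_preimage_zero {f : ℂ → ℂ} (hf : Differentiable ℂ f) {z₀ : ℂ}
    (hz₀ : f z₀ ≠ 0) : (f ⁻¹' {0}).Countable := by
  have hdiscrete := (mem_codiscrete'.1
    (AnalyticOnNhd.preimage_zero_mem_codiscrete (fun z _ => hf.analyticAt z) hz₀)).2
  simpa using (HereditarilyLindelofSpace.isLindelof _).countable_of_isDiscrete hdiscrete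

noncomputable def wronskian (f g : ℂ → ℂ) (z : ℂ) : ℂ := f z * deriv g z - deriv f z * g z

section CriticalPoints

variable {P Q : ℂ → ℂ}

theorem deriv_add_const_mul {z : ℂ} (hP : DifferentiableAt ℂ P z) (hQ : DifferentiableAt ℂ Q z)
    (a : ℂ) : deriv (fun w => P w + a * Q w) z = deriv P z + a * deriv Q z :=
  (hP.hasDerivAt.add (hQ.hasDerivAt.const_mul a)).deriv

noncomputable def critParam (P Q : ℂ → ℂ) (z : ℂ) : ℂ := -deriv P z / deriv Q z

noncomputable def critValue (P Q : ℂ → ℂ) (z : ℂ) : ℂ := P z + critParam P Q z * Q z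

theorem critParam_eq_iff {z a : ℂ} (hz : deriv Q z ≠ 0) :
    critParam P Q z = a ↔ deriv P z + a * deriv Q z = 0 := by
  rw [critParam, div_eq_iff hz]
  constructor <;> intro h <;> linear_combination -h

theorem hasStrictDerivAt_critParam (hP : Differentiable ℂ P) (hQ : Differentiable ℂ Q) {z : ℂ}
    (hz : deriv Q z ≠ 0) :
    HasStrictDerivAt (critParam P Q) (-wronskian (deriv Q) (deriv P) z / deriv Q z ^ 2) z := by
  refine (((hP.deriv.analyticAt z).hasStrictDerivAt.neg).div
    (hQ.deriv.analyticAt z).hasStrictDerivAt hz).congr_deriv ?_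
  simp only [wronskian, Pi.neg_apply]
  ring

/-- Envelope theorem. -/
theorem hasDerivAt_add_mul_comp_of_critical {φ : ℂ → ℂ} {φ' a : ℂ}
    (hP : DifferentiableAt ℂ P (φ a)) (hQ : DifferentiableAt ℂ Q (φ a)) (hφ : HasDerivAt φ φ' a)
    (hcrit : deriv P (φ a) + a * deriv Q (φ a) = 0) :
    HasDerivAt (fun b => P (φ b) + b * Q (φ b)) (Q (φ a)) a := by
  refine ((hP.hasDerivAt.comp a hφ).add
    ((hasDerivAt_id' a).mul (hQ.hasDerivAt.comp a hφ))).congr_deriv ?_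
  simp only [Function.comp_apply]
  linear_combination φ' * hcrit

def nondegCrit (P Q : ℂ → ℂ) : Set ℂ :=
  {z | deriv Q z ≠ 0 ∧ wronskian (deriv Q) (deriv P) z ≠ 0}

def critCoincidences (P Q : ℂ → ℂ) : Set (ℂ × ℂ) :=
  {p | p.1 ∈ nondegCrit P Q ∧ p.2 ∈ nondegCrit P Q ∧ critParam P Q p.1 = critParam P Q p.2 ∧
    critValue P Q p.1 = critValue P Q p.2 ∧ Q p.1 ≠ Q p.2}

theorem exists_leftInverse_critParam_hasDerivAt (hP : Differentiable ℂ P)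
    (hQ : Differentiable ℂ Q) {t : ℂ} (ht : t ∈ nondegCrit P Q) :
    ∃ φ : ℂ → ℂ, (∀ᶠ s in 𝓝 t, φ (critParam P Q s) = s) ∧
      HasDerivAt (fun b => P (φ b) + b * Q (φ b)) (Q t) (critParam P Q t) := by
  obtain ⟨hQt, hWt⟩ := ht
  have hs := hasStrictDerivAt_critParam hP hQ hQt
  have hd := div_ne_zero (neg_ne_zero.2 hWt) (pow_ne_zero 2 hQt)
  have hleft := hs.eventually_left_inverse hd
  have hφt : hs.localInverse _ _ _ hd (critParam P Q t) = t := hleft.self_of_nhds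
  refine ⟨_, hleft, ?_⟩
  have := hasDerivAt_add_mul_comp_of_critical (hP _) (hQ _) (hs.to_localInverse hd).hasDerivAt
    (by rw [hφt]; exact (critParam_eq_iff hQt).1 rfl)
  rwa [hφt] at this

theorem eventually_critParam_eq (hP : Differentiable ℂ P) (hQ : Differentiable ℂ Q)
    {p : ℂ × ℂ} (hp : p ∈ critCoincidences P Q) :
    ∀ᶠ q in 𝓝[critCoincidences P Q] p, critParam P Q q.1 = critParam P Q p.1 := by
  obtain ⟨t₁, t₂⟩ := p
  obtain ⟨ht₁, ht₂, hA, -, hne⟩ := hp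
  dsimp only at ht₁ ht₂ hA hne ⊢
  obtain ⟨φ₁, hleft₁, hV₁⟩ := exists_leftInverse_critParam_hasDerivAt hP hQ ht₁
  obtain ⟨φ₂, hleft₂, hV₂⟩ := exists_leftInverse_critParam_hasDerivAt hP hQ ht₂
  rw [← hA] at hV₂
  have hEne := (hV₁.sub hV₂).eventually_ne (c := 0) (sub_ne_zero.2 hne)
  rw [eventually_nhdsWithin_iff] at hEne ⊢
  have hcont := (hasStrictDerivAt_critParam hP hQ ht₁.1).hasDerivAt.continuousAt
  filter_upwards [(hcont.tendsto.eventually hEne).prod_inl_nhds t₂,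
    hleft₁.prod_inl_nhds t₂, hleft₂.prod_inr_nhds t₁] with ⟨s₁, s₂⟩ hE hl₁ hl₂ hs
  obtain ⟨-, -, hA', hV', -⟩ := hs
  dsimp only at hE hl₁ hl₂ hA' hV' ⊢
  by_contra hne'
  apply hE (mem_compl_singleton_iff.2 hne')
  simp only [critValue, Pi.sub_apply] at hV' ⊢
  rw [hl₁, hA', hl₂]
  linear_combination hV' - Q s₁ * hA'

theorem exists_countable_forall_critical_eq (hP : Differentiable ℂ P) (hQ : Differentiable ℂ Q)
    (hPQ : ∀ z, deriv Q z = 0 → deriv P z ≠ 0)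
    (hW : ∃ z, wronskian (deriv Q) (deriv P) z ≠ 0) :
    ∃ E : Set ℂ, E.Countable ∧ ∀ a ∉ E, ∀ u v : ℂ,
      deriv (fun z => P z + a * Q z) u = 0 → deriv (fun z => P z + a * Q z) v = 0 →
      P u + a * Q u = P v + a * Q v → Q u = Q v := by
  obtain ⟨z₀, hz₀⟩ := hW
  have hWdiff : Differentiable ℂ (wronskian (deriv Q) (deriv P)) :=
    (hQ.deriv.mul hP.deriv.deriv).sub (hQ.deriv.deriv.mul hP.deriv)
  refine ⟨critParam P Q '' (wronskian (deriv Q) (deriv P) ⁻¹' {0}) ∪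
      (fun q => critParam P Q q.1) '' critCoincidences P Q,
    ((hWdiff.countable_preimage_zero hz₀).image _).union
      (countable_image_of_eventually_eq fun p hp => eventually_critParam_eq hP hQ hp), ?_⟩
  intro a ha u v hu hv huv
  have hnondeg : ∀ z, deriv (fun z => P z + a * Q z) z = 0 →
      z ∈ nondegCrit P Q ∧ critParam P Q z = a := by
    intro z hz
    rw [deriv_add_const_mul (hP z) (hQ z)] at hz
    have hQz : deriv Q z ≠ 0 := fun hQz => hPQ z hQz (by simpa [hQz] using hz)
    have hAz := (critParam_eq_iff hQz).2 hz
    exact ⟨⟨hQz, fun hWz => ha (Or.inl ⟨z, hWz, hAz⟩)⟩, hAz⟩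
  obtain ⟨hu, hAu⟩ := hnondeg u hu
  obtain ⟨hv, hAv⟩ := hnondeg v hv
  by_contra hne
  refine ha (Or.inr ⟨(u, v), ⟨hu, hv, hAu.trans hAv.symm, ?_, hne⟩, hAu⟩)
  simpa only [critValue, hAu, hAv] using huv

end CriticalPoints

theorem hasDerivAt_cos_mul_comp_sin {h : ℂ → ℂ} (hh : Differentiable ℂ h) (z : ℂ) :
    HasDerivAt (fun w => cos w * h (sin w))
      (-sin z * h (sin z) + (1 - sin z ^ 2) * deriv h (sin z)) z := by
  refine ((hasDerivAt_cos z).mul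
    ((hh (sin z)).hasDerivAt.comp z (hasDerivAt_sin z))).congr_deriv ?_
  simp only [Function.comp_apply]
  linear_combination deriv h (sin z) * sin_sq_add_cos_sq z

theorem stmt1_general (h : ℂ → ℂ) (hdiff : Differentiable ℂ h)
    (h1 : h 1 ≠ 0) (hm1 : h (-1) ≠ 0) :
    ∃ E : Set ℂ, E.Countable ∧
      ∀ a : ℂ, a ∉ E → ∀ c : ℂ, ∀ u v : ℂ,
        Complex.cos u * h (Complex.sin u) + a * Complex.sin u = c →
        deriv (fun z => Complex.cos z * h (Complex.sin z) + a * Complex.sin z) u = 0 →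
        Complex.cos v * h (Complex.sin v) + a * Complex.sin v = c →
        deriv (fun z => Complex.cos z * h (Complex.sin z) + a * Complex.sin z) v = 0 →
        Complex.cos u = Complex.cos v ∧ Complex.sin u = Complex.sin v := by
  have hP z := hasDerivAt_cos_mul_comp_sin hdiff z
  have hPQ : ∀ z, deriv sin z = 0 → deriv (fun w => cos w * h (sin w)) z ≠ 0 := by
    intro z hz
    rw [Complex.deriv_sin] at hz
    have hsin : sin z ^ 2 = 1 := by linear_combination sin_sq_add_cos_sq z - cos z * hz
    rw [(hP z).deriv, hsin]
    rcases sq_eq_one_iff.1 hsin with hs | hs <;> simpa [hs]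
  have hW : wronskian (deriv sin) (deriv fun w => cos w * h (sin w)) (Real.pi / 2 : ℂ) ≠ 0 := by
    simpa [wronskian, (hP _).deriv, Complex.deriv_sin, Complex.deriv_cos'] using h1
  obtain ⟨E, hE, hEsin⟩ := exists_countable_forall_critical_eq (fun z => (hP z).differentiableAt)
    differentiable_sin hPQ ⟨_, hW⟩
  refine ⟨insert 0 E, hE.insert 0, fun a ha c u v hu hu' hv hv' => ?_⟩
  have hsin := hEsin a (fun haE => ha (mem_insert_of_mem 0 haE)) u v hu' hv' (hu.trans hv.symm)
  have ha0 : a ≠ 0 := fun ha0 => ha (by simp [ha0])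
  refine ⟨mul_left_cancel₀ ha0 ?_, hsin⟩
  rw [deriv_add_const_mul (hP u).differentiableAt differentiableAt_sin, (hP u).deriv,
    Complex.deriv_sin] at hu'
  rw [deriv_add_const_mul (hP v).differentiableAt differentiableAt_sin, (hP v).deriv,
    Complex.deriv_sin, ← hsin] at hv'
  linear_combination hu' - hv'

/-- Let h be a transcendental entire function with h(1) ≠ 0 and
h(−1) ≠ 0, and for a ∈ ℂ put H_a(z) := cos z · h(sin z) + a · sin z. Then there
exists an at most countable set E ⊂ ℂ such that for every a ∉ E, every c ∈ ℂ,
and any two solutions u, v of H_a(z) = c, H_a′(z) = 0, one has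
cos u = cos v and sin u = sin v. -/
theorem stmt1 (h : ℂ → ℂ) (hdiff : Differentiable ℂ h)
    (htrans : ∀ p : Polynomial ℂ, h ≠ fun z => p.eval z)
    (h1 : h 1 ≠ 0) (hm1 : h (-1) ≠ 0) :
    ∃ E : Set ℂ, E.Countable ∧
      ∀ a : ℂ, a ∉ E → ∀ c : ℂ, ∀ u v : ℂ,
        Complex.cos u * h (Complex.sin u) + a * Complex.sin u = c →
        deriv (fun z => Complex.cos z * h (Complex.sin z) + a * Complex.sin z) u = 0 →
        Complex.cos v * h (Complex.sin v) + a * Complex.sin v = c →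
        deriv (fun z => Complex.cos z * h (Complex.sin z) + a * Complex.sin z) v = 0 →
        Complex.cos u = Complex.cos v ∧ Complex.sin u = Complex.sin v :=
  stmt1_general h hdiff h1 hm1
end

section
/- Let H and α be entire functions such that α′ has at least one zero and H′ and α′ have no common zeros. Then there exists an at most countable set E ⊂ ℂ such that for every a ∈ ℂ \ E, every zero of the function z ↦ H′(z) − a·α′(z) is simple; that is, whenever H′(z) − a·α′(z) = 0 one has H″(z) − a·α″(z) ≠ 0. -/
open Metric Set Filter

/-! The Wronskian `W = H″α′ − H′α″` vanishes at every multiple zero `z` of `H′ − aα′`, and there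
`α′(z) ≠ 0`, so `a = H′(z)/α′(z)`. If `W ≢ 0` its zeros are isolated, hence countable, and so are
the resulting values of `a`. If `W ≡ 0`, then `α′/H′` is locally constant near a zero `z₀` of `α′`
(where `H′(z₀) ≠ 0`), so `α′` vanishes near `z₀` and hence everywhere; then `H′ − aα′ = H′` has no
zeros at all. -/

theorem AnalyticOnNhd.countable_setOf_eq_zero_inter {𝕜 E : Type*} [NontriviallyNormedField 𝕜]
    [SecondCountableTopology 𝕜] [NormedAddCommGroup E] [NormedSpace 𝕜 E] {f : 𝕜 → E}
    {U : Set 𝕜} (hf : AnalyticOnNhd 𝕜 f U) (hU : IsPreconnected U) (hne : ¬EqOn f 0 U) :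
    ({z | f z = 0} ∩ U).Countable := by
  have hcod : {z | f z = 0}ᶜ ∈ codiscreteWithin U :=
    (hf.eqOn_zero_or_eventually_ne_zero_of_preconnected hU).resolve_left hne
  exact (HereditarilyLindelofSpace.isLindelof _).countable_of_isDiscrete
    (isDiscrete_of_codiscreteWithin hcod)

theorem eq_zero_of_wronskian_eq_zero {f g : ℂ → ℂ} (hf : Differentiable ℂ f)
    (hg : Differentiable ℂ g) (hW : ∀ z, deriv f z * g z - f z * deriv g z = 0) {z₀ : ℂ}
    (hf₀ : f z₀ ≠ 0) (hg₀ : g z₀ = 0) : g = 0 := by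
  obtain ⟨r, hr, hball⟩ : ∃ r > 0, ∀ z ∈ ball z₀ r, f z ≠ 0 :=
    eventually_nhds_iff_ball.1 (hf.continuous.continuousAt.eventually_ne hf₀)
  have hquot : ∀ z ∈ ball z₀ r, g z / f z = g z₀ / f z₀ := fun z hz =>
    isOpen_ball.is_const_of_deriv_eq_zero (f := fun z => g z / f z)
      (convex_ball z₀ r).isPreconnected
      (fun w hw => ((hg w).div (hf w) (hball w hw)).differentiableWithinAt)
      (fun w hw => by
        rw [deriv_fun_div (hg w) (hf w) (hball w hw), Pi.zero_apply, div_eq_zero_iff]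
        exact Or.inl (by linear_combination -hW w))
      hz (mem_ball_self hr)
  have hg_near : g =ᶠ[nhds z₀] 0 := by
    filter_upwards [ball_mem_nhds z₀ hr] with z hz
    simpa [hg₀, hball z hz] using hquot z hz
  funext z
  exact (hg.differentiableOn.analyticOnNhd isOpen_univ)
    |>.eqOn_zero_of_preconnected_of_eventuallyEq_zero isPreconnected_univ (mem_univ z₀) hg_near
      (mem_univ z)

theorem countable_setOf_exists_multiple_zero_sub_mul {f g : ℂ → ℂ} (hf : Differentiable ℂ f)
    (hg : Differentiable ℂ g) (hg₀ : ∃ z, g z = 0) (hfg : ∀ z, f z = 0 → g z ≠ 0) :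
    {a : ℂ | ∃ z, f z - a * g z = 0 ∧ deriv f z - a * deriv g z = 0}.Countable := by
  set W : ℂ → ℂ := fun z => deriv f z * g z - f z * deriv g z
  by_cases hW : ∀ z, W z = 0
  · obtain ⟨z₀, hz₀⟩ := hg₀
    have hg_zero : g = 0 :=
      eq_zero_of_wronskian_eq_zero hf hg hW (fun h => hfg z₀ h hz₀) hz₀
    convert countable_empty
    refine eq_empty_of_forall_notMem fun a ⟨z, hz, _⟩ => hfg z ?_ (congrFun hg_zero z)
    simpa [hg_zero] using hz
  · have hWa : AnalyticOnNhd ℂ W univ :=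
      ((hf.deriv.mul hg).sub (hf.mul hg.deriv)).differentiableOn.analyticOnNhd isOpen_univ
    have hW_countable : {z | W z = 0}.Countable := by
      simpa using hWa.countable_setOf_eq_zero_inter isPreconnected_univ
        fun h => hW fun z => h (mem_univ z)
    refine (hW_countable.image fun z => f z / g z).mono ?_
    rintro a ⟨z, hz, hz'⟩
    have hgz : g z ≠ 0 := fun h => hfg z (by simpa [h] using hz) h
    refine ⟨z, ?_, ?_⟩
    · show deriv f z * g z - f z * deriv g z = 0
      rw [sub_eq_zero.1 hz, sub_eq_zero.1 hz']
      ring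
    · rw [div_eq_iff hgz]
      exact sub_eq_zero.1 hz

/-- Let H and α be entire functions such that α′ has at least one
zero and H′ and α′ have no common zeros. Then there exists an at most countable
set E ⊂ ℂ such that for every a ∉ E, every zero of z ↦ H′(z) − a·α′(z) is
simple: whenever H′(z) − a·α′(z) = 0 one has H″(z) − a·α″(z) ≠ 0. -/
theorem stmt10 (H α : ℂ → ℂ)
    (hH : Differentiable ℂ H) (hα : Differentiable ℂ α)
    (hzero : ∃ z : ℂ, deriv α z = 0)
    (hno : ∀ z : ℂ, ¬(deriv H z = 0 ∧ deriv α z = 0)) :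
    ∃ E : Set ℂ, E.Countable ∧
      ∀ a : ℂ, a ∉ E → ∀ z : ℂ,
        deriv H z - a * deriv α z = 0 →
        deriv (deriv H) z - a * deriv (deriv α) z ≠ 0 :=
  ⟨_, countable_setOf_exists_multiple_zero_sub_mul hH.deriv hα.deriv hzero
      fun z h₁ h₂ => hno z ⟨h₁, h₂⟩,
    fun _ ha z h₁ h₂ => ha ⟨z, h₁, h₂⟩⟩
end

section
/- Let G be an entire function such that G′ has infinitely many zeros and such that there exists n ∈ ℕ with the property that for every c ∈ ℂ the set {z ∈ ℂ : G(z) = c and G′(z) = 0} has at most n elements. Then G cannot be written as G = f ∘ q, where f is a nonconstant periodic entire function and q is a nonconstant polynomial. -/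
/-!
If `w` is a critical point of `f` with period `λ`, so is every `w + kλ`, with the same value `f w`.
The polynomial `q` is onto, and by the chain rule every preimage of `w + kλ` is a critical point
of `f ∘ q`; so `f ∘ q` has infinitely many critical points over the single value `f w`. A critical
point `w = q z` of `f` exists because `G' = (f' ∘ q) q'` has infinitely many zeros and `q'` only
finitely many.
-/

open Polynomial Function

theorem Function.Periodic.deriv {𝕜 F : Type*} [NontriviallyNormedField 𝕜] [NormedAddCommGroup F]
    [NormedSpace 𝕜 F] {f : 𝕜 → F} {c : 𝕜} (h : Periodic f c) : Periodic (_root_.deriv f) c :=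
  fun x => by rw [← deriv_comp_add_const, funext h]

section

variable {𝕜 : Type*} [NontriviallyNormedField 𝕜]

theorem Polynomial.deriv_comp_eval {f : 𝕜 → 𝕜} {q : 𝕜[X]} {x : 𝕜}
    (hf : DifferentiableAt 𝕜 f (q.eval x)) :
    deriv (fun z => f (q.eval z)) x = deriv f (q.eval x) * q.derivative.eval x := by
  rw [← Polynomial.deriv, ← deriv_comp x hf q.differentiableAt]
  rfl

theorem infinite_setOf_critical_comp_eval_of_periodic [IsAlgClosed 𝕜] [CharZero 𝕜]
    {f : 𝕜 → 𝕜} {c : 𝕜} (hf : Differentiable 𝕜 f) (hper : Periodic f c) (hc : c ≠ 0)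
    {q : 𝕜[X]} (hq : q.natDegree ≠ 0) {w : 𝕜} (hw : deriv f w = 0) :
    {z | f (q.eval z) = f w ∧ deriv (fun z => f (q.eval z)) z = 0}.Infinite := by
  have hshift : Injective fun k : ℕ => w + k * c := fun k l hkl => by
    simpa [hc] using hkl
  have hpre : (q.eval ⁻¹' Set.range fun k : ℕ => w + k * c).Infinite :=
    (Set.infinite_range_of_injective hshift).preimage
      (by simp [(IsAlgClosed.eval_surjective hq).range_eq])
  refine hpre.mono ?_
  rintro z ⟨k, hk : w + k * c = q.eval z⟩
  refine ⟨by rw [← hk, hper.nat_mul k], ?_⟩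
  rw [deriv_comp_eval hf.differentiableAt, ← hk, hper.deriv.nat_mul k, hw, zero_mul]

end

theorem stmt12_general (G : ℂ → ℂ)
    (hzeros : Set.Infinite {z : ℂ | deriv G z = 0})
    (hbound : ∃ n : ℕ, ∀ c : ℂ, ∃ s : Finset ℂ, s.card ≤ n ∧
      {z : ℂ | G z = c ∧ deriv G z = 0} ⊆ ↑s) :
    ¬ ∃ (f : ℂ → ℂ) (q : Polynomial ℂ),
        Differentiable ℂ f ∧
        (∃ lam : ℂ, lam ≠ 0 ∧ ∀ z : ℂ, f (z + lam) = f z) ∧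
        (¬ ∃ c : ℂ, ∀ z : ℂ, f z = c) ∧
        0 < q.degree ∧
        (∀ z : ℂ, G z = f (q.eval z)) := by
  rintro ⟨f, q, hf, ⟨lam, hlam, hper⟩, -, hq, hGq⟩
  obtain rfl : G = fun z => f (q.eval z) := funext hGq
  have hq : q.natDegree ≠ 0 := (natDegree_pos_iff_degree_pos.mpr hq).ne'
  obtain ⟨z₀, hz₀, hq'z₀⟩ :=
    (hzeros.sdiff (finite_setOfPred_isRoot (derivative_eq_zero.not.mpr hq))).nonempty
  have hw : deriv f (q.eval z₀) = 0 := by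
    rw [Set.mem_ofPred_eq, deriv_comp_eval hf.differentiableAt] at hz₀
    exact (mul_eq_zero.mp hz₀).resolve_right hq'z₀
  obtain ⟨_, hn⟩ := hbound
  obtain ⟨s, -, hs⟩ := hn (f (q.eval z₀))
  exact infinite_setOf_critical_comp_eval_of_periodic hf hper hlam hq hw (s.finite_toSet.subset hs)

/-- Let G be an entire function such that G′ has infinitely many
zeros and such that there exists n ∈ ℕ with: for every c ∈ ℂ the set
{z : G(z) = c and G′(z) = 0} has at most n elements. Then G cannot be written
as G = f ∘ q with f a nonconstant periodic entire function and q a nonconstant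
polynomial. -/
theorem stmt12 (G : ℂ → ℂ) (hG : Differentiable ℂ G)
    (hzeros : Set.Infinite {z : ℂ | deriv G z = 0})
    (hbound : ∃ n : ℕ, ∀ c : ℂ, ∃ s : Finset ℂ, s.card ≤ n ∧
      {z : ℂ | G z = c ∧ deriv G z = 0} ⊆ ↑s) :
    ¬ ∃ (f : ℂ → ℂ) (q : Polynomial ℂ),
        Differentiable ℂ f ∧
        (∃ lam : ℂ, lam ≠ 0 ∧ ∀ z : ℂ, f (z + lam) = f z) ∧
        (¬ ∃ c : ℂ, ∀ z : ℂ, f z = c) ∧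
        0 < q.degree ∧
        (∀ z : ℂ, G z = f (q.eval z)) :=
  stmt12_general G hzeros hbound
end
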